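/- Let n = 2m+1 ≥ 3 be odd and let A_n be the n×n upper-shift matrix over ℂ. Define h = ∑_{i=1}^n (−1)^{i+1} E_{ii}, and for 1 ≤ k ≤ m define e_k = ∑_{l=1}^{m−k+1} (E_{2l−1, 2k+2l−2} − E_{2k+2l−1, 2l}). Then the solution set {X ∈ M_n(ℂ) | Xᵀ A_n + A_n X = 0} equals the ℂ-linear span of {h, e_1, …, e_m}. -/

import Mathlib

/-!
Write `x i j` for the entries of `X`. The equation `Xᵀ A + A X = 0` says exactly that
`x (i+1) 0 = 0` and `x (i+1) (j+1) = -x j i`, so by induction on `i + j` a solution is determined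
by its first row. Applying the second rule twice gives `x (i+2) (j+2) = x i j`; since `n` is odd,
this moves an entry `x 0 t` with `t ≥ 2` even to an entry `x (2s) (n-1)` with `2s < n-1`, and the
second rule with `i = n-1` shows that these vanish. So a solution is determined by `x 0 0` and the
`x 0 (2k-1)`, which are the coefficients of `h` and the `e_k`: subtracting that combination leaves
a solution with zero first row.
-/

open Matrix

/-- The `n × n` nilpotent upper-shift matrix `A_n`. -/
def shiftMat (n : ℕ) : Matrix (Fin n) (Fin n) ℂ :=
  Matrix.of fun i j => if (j : ℕ) = (i : ℕ) + 1 then 1 else 0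

/-- `h = ∑_{i=1}^n (-1)^{i+1} E_{ii}` (written with 0-indexed `i`). -/
noncomputable def hMat (n : ℕ) : Matrix (Fin n) (Fin n) ℂ :=
  ∑ i : Fin n, ((-1 : ℂ)) ^ (i : ℕ) • Matrix.single i i 1

/-- For `n = 2m+1` odd and `1 ≤ k ≤ m`,
`e_k = ∑_{l=1}^{m-k+1} (E_{2l-1, 2k+2l-2} - E_{2k+2l-1, 2l})` (1-indexed entries). -/
noncomputable def eMatOdd (m k : ℕ) : Matrix (Fin (2 * m + 1)) (Fin (2 * m + 1)) ℂ :=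
  if h : 1 ≤ k ∧ k ≤ m then
    ∑ l : Fin (m - k + 1),
      (Matrix.single
          (⟨2 * l.1, by have := l.2; omega⟩ : Fin (2 * m + 1))
          (⟨2 * k + 2 * l.1 - 1, by have := l.2; omega⟩ : Fin (2 * m + 1)) 1 -
        Matrix.single
          (⟨2 * k + 2 * l.1, by have := l.2; omega⟩ : Fin (2 * m + 1))
          (⟨2 * l.1 + 1, by have := l.2; omega⟩ : Fin (2 * m + 1)) 1)
  else 0

section Congr

variable {ι R : Type*} [Fintype ι] [CommRing R]

def congrLieMap (A : Matrix ι ι R) : Matrix ι ι R →ₗ[R] Matrix ι ι R where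
  toFun X := Xᵀ * A + A * X
  map_add' X Y := by simp only [transpose_add, add_mul, mul_add]; abel
  map_smul' c X := by
    simp only [transpose_smul, smul_mul, Matrix.mul_smul, smul_add, RingHom.id_apply]

lemma coe_ker_congrLieMap (A : Matrix ι ι R) :
    (LinearMap.ker (congrLieMap A) : Set (Matrix ι ι R)) = {X | Xᵀ * A + A * X = 0} := rfl

end Congr

-- Extending by zero outside the matrix makes the boundary cases of the recursion uniform.
def natEntry {α : Type*} [Zero α] {n : ℕ} (X : Matrix (Fin n) (Fin n) α) (i j : ℕ) : α :=
  if h : i < n ∧ j < n then X ⟨i, h.1⟩ ⟨j, h.2⟩ else 0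

section NatEntry

variable {α : Type*} [Zero α] {n : ℕ} (X : Matrix (Fin n) (Fin n) α)

@[simp]
lemma natEntry_val (i j : Fin n) : natEntry X i j = X i j := by
  simp [natEntry]

lemma natEntry_of_le_left {i : ℕ} (hi : n ≤ i) (j : ℕ) : natEntry X i j = 0 := by
  simp [natEntry, show ¬i < n by omega]

lemma natEntry_of_le_right (i : ℕ) {j : ℕ} (hj : n ≤ j) : natEntry X i j = 0 := by
  simp [natEntry, show ¬j < n by omega]

lemma natEntry_transpose (i j : ℕ) : natEntry Xᵀ i j = natEntry X j i := by
  simp only [natEntry, transpose_apply, and_comm]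

lemma eq_zero_of_natEntry_eq_zero (h : ∀ i j, natEntry X i j = 0) : X = 0 := by
  ext i j
  simpa using h i j

end NatEntry

lemma shiftMat_mul_apply {n : ℕ} (X : Matrix (Fin n) (Fin n) ℂ) (i j : Fin n) :
    (shiftMat n * X) i j = natEntry X (i + 1) j := by
  rw [mul_apply]
  by_cases hi : (i : ℕ) + 1 < n
  · rw [Finset.sum_eq_single ⟨i + 1, hi⟩] <;>
      simp +contextual [shiftMat, natEntry, hi, Fin.ext_iff]
  · rw [natEntry_of_le_left X (by omega)]
    refine Finset.sum_eq_zero fun k _ => ?_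
    simp [shiftMat, show (k : ℕ) ≠ i + 1 by omega]

lemma mul_shiftMat_apply {n : ℕ} (X : Matrix (Fin n) (Fin n) ℂ) (i j : Fin n) :
    (X * shiftMat n) i j = if (j : ℕ) = 0 then 0 else natEntry X i (j - 1) := by
  rw [mul_apply]
  split_ifs with hj
  · refine Finset.sum_eq_zero fun k _ => ?_
    simp [shiftMat, hj]
  · rw [Finset.sum_eq_single ⟨j - 1, by omega⟩]
    · simp [shiftMat, natEntry, Nat.sub_add_cancel (Nat.one_le_iff_ne_zero.mpr hj),
        show (j : ℕ) - 1 < n by omega]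
    · intro k _ hk
      have : (j : ℕ) ≠ k + 1 := fun h => hk (Fin.ext (by dsimp only; omega))
      simp [shiftMat, this]
    · simp

lemma transpose_mul_shiftMat_add_eq_zero_iff {n : ℕ} (X : Matrix (Fin n) (Fin n) ℂ) :
    Xᵀ * shiftMat n + shiftMat n * X = 0 ↔
      (∀ i, natEntry X (i + 1) 0 = 0) ∧
        ∀ i j, j + 1 < n → natEntry X (i + 1) (j + 1) = -natEntry X j i := by
  have entry_eq (i j : Fin n) : (Xᵀ * shiftMat n + shiftMat n * X) i j =
      (if (j : ℕ) = 0 then 0 else natEntry X (j - 1) i) + natEntry X (i + 1) j := by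
    rw [Matrix.add_apply, mul_shiftMat_apply, shiftMat_mul_apply, natEntry_transpose]
  constructor
  · intro hX
    refine ⟨fun i => ?_, fun i j hj => ?_⟩
    · by_cases hi : i < n
      · simpa [entry_eq] using congr_fun₂ hX ⟨i, hi⟩ ⟨0, by omega⟩
      · exact natEntry_of_le_left X (by omega) 0
    · by_cases hi : i < n
      · have := congr_fun₂ hX ⟨i, hi⟩ ⟨j + 1, hj⟩
        rw [entry_eq, if_neg (Nat.succ_ne_zero j), Matrix.zero_apply, Nat.add_sub_cancel] at this
        linear_combination this
      · rw [natEntry_of_le_left X (by omega), natEntry_of_le_right X j (by omega), neg_zero]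
  · rintro ⟨hcol, hrec⟩
    ext i ⟨_ | j, hj⟩
    · simp [entry_eq, hcol]
    · simp [entry_eq, hrec i j hj]

section Solutions

variable {n : ℕ} {X : Matrix (Fin n) (Fin n) ℂ}

lemma natEntry_add_two_of_sol (hX : Xᵀ * shiftMat n + shiftMat n * X = 0) {i j : ℕ}
    (hij : i ≤ j) (hj : j + 2 < n) : natEntry X (i + 2) (j + 2) = natEntry X i j := by
  have hrec := ((transpose_mul_shiftMat_add_eq_zero_iff X).1 hX).2
  rw [hrec (i + 1) (j + 1) hj, hrec j i (by omega), neg_neg]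

lemma natEntry_add_two_mul_of_sol (hX : Xᵀ * shiftMat n + shiftMat n * X = 0) {i j : ℕ}
    (s : ℕ) (hij : i ≤ j) (hj : j + 2 * s < n) :
    natEntry X (i + 2 * s) (j + 2 * s) = natEntry X i j := by
  induction s with
  | zero => rfl
  | succ s ih =>
    rw [Nat.mul_succ, ← add_assoc, ← add_assoc,
      natEntry_add_two_of_sol hX (by omega) (by omega), ih (by omega)]

lemma natEntry_last_of_sol (hX : Xᵀ * shiftMat n + shiftMat n * X = 0) {i : ℕ}
    (hi : i + 1 < n) : natEntry X i (n - 1) = 0 := by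
  have := ((transpose_mul_shiftMat_add_eq_zero_iff X).1 hX).2 (n - 1) i hi
  rwa [natEntry_of_le_left X (by omega), zero_eq_neg] at this

lemma natEntry_zero_of_sol_of_even (hX : Xᵀ * shiftMat n + shiftMat n * X = 0) (hn : Odd n)
    {t : ℕ} (ht : Even t) (ht0 : t ≠ 0) : natEntry X 0 t = 0 := by
  by_cases htn : t < n
  · obtain ⟨s, hs⟩ : ∃ s, t + 2 * s + 1 = n := by
      obtain ⟨a, rfl⟩ := ht
      obtain ⟨b, rfl⟩ := hn
      exact ⟨b - a, by omega⟩
    have climb := natEntry_add_two_mul_of_sol hX s (Nat.zero_le t) (by omega)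
    rwa [zero_add, show t + 2 * s = n - 1 by omega, natEntry_last_of_sol hX (by omega),
      eq_comm] at climb
  · exact natEntry_of_le_right X 0 (by omega)

lemma eq_zero_of_sol_of_natEntry_zero (hX : Xᵀ * shiftMat n + shiftMat n * X = 0)
    (hrow : ∀ j, natEntry X 0 j = 0) : X = 0 := by
  obtain ⟨hcol, hrec⟩ := (transpose_mul_shiftMat_add_eq_zero_iff X).1 hX
  suffices ∀ s i j, i + j = s → natEntry X i j = 0 from
    eq_zero_of_natEntry_eq_zero X fun i j => this _ i j rfl
  intro s
  induction s using Nat.strong_induction_on with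
  | _ s ih =>
    rintro (_ | i) (_ | j) rfl
    · exact hrow 0
    · exact hrow _
    · exact hcol i
    · by_cases hj : j + 1 < n
      · rw [hrec i j hj, ih (j + i) (by omega) j i rfl, neg_zero]
      · exact natEntry_of_le_right X _ (by omega)

end Solutions

lemma eq_zero_of_sol_of_row_zero {m : ℕ} {X : Matrix (Fin (2 * m + 1)) (Fin (2 * m + 1)) ℂ}
    (hX : Xᵀ * shiftMat (2 * m + 1) + shiftMat (2 * m + 1) * X = 0) (h0 : X 0 0 = 0)
    (hodd : ∀ t : Fin (2 * m + 1), Odd (t : ℕ) → X 0 t = 0) : X = 0 := by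
  refine eq_zero_of_sol_of_natEntry_zero hX fun t => ?_
  by_cases htn : t < 2 * m + 1
  · rcases Nat.even_or_odd t with ht | ht
    · rcases eq_or_ne t 0 with rfl | ht0
      · simpa [natEntry] using h0
      · exact natEntry_zero_of_sol_of_even hX (odd_two_mul_add_one m) ht ht0
    · simpa [natEntry, htn] using hodd ⟨t, htn⟩ ht
  · exact natEntry_of_le_right X 0 (by omega)

lemma hMat_eq_diagonal (n : ℕ) : hMat n = diagonal fun i : Fin n => (-1 : ℂ) ^ (i : ℕ) := by
  simp_rw [hMat, smul_single, smul_eq_mul, mul_one]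
  exact sum_single_eq_diagonal _

lemma hMat_sol (n : ℕ) : (hMat n)ᵀ * shiftMat n + shiftMat n * hMat n = 0 := by
  ext i j
  by_cases hij : (j : ℕ) = i + 1
  · simp [hMat_eq_diagonal, shiftMat, hij, pow_succ]
  · simp [hMat_eq_diagonal, shiftMat, hij]

lemma eMatOdd_apply {m k : ℕ} (hk : 1 ≤ k) (hkm : k ≤ m) (i j : Fin (2 * m + 1)) :
    eMatOdd m k i j =
      (if (i : ℕ) % 2 = 0 ∧ (j : ℕ) + 1 = i + 2 * k then 1 else 0) -
        if (j : ℕ) % 2 = 1 ∧ (i : ℕ) + 1 = j + 2 * k then 1 else 0 := by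
  simp only [eMatOdd, dif_pos (And.intro hk hkm), Matrix.sub_apply, Matrix.sum_apply, single_apply,
    Fin.ext_iff, Finset.sum_sub_distrib]
  congr 1 <;> rw [Fintype.sum_ite_eq_ite_exists _ (fun a b ha hb => Fin.ext (by omega))] <;>
    congr 1 <;> apply propext
  · exact ⟨fun ⟨l, hl⟩ => by omega, fun h =>
    ⟨⟨i / 2, by omega⟩, by dsimp only; omega⟩⟩
  · exact ⟨fun ⟨l, hl⟩ => by omega, fun h =>
    ⟨⟨j / 2, by omega⟩, by dsimp only; omega⟩⟩

lemma eMatOdd_sol {m k : ℕ} (hk : 1 ≤ k) (hkm : k ≤ m) :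
    (eMatOdd m k)ᵀ * shiftMat (2 * m + 1) + shiftMat (2 * m + 1) * eMatOdd m k = 0 := by
  have entry (i j : ℕ) : natEntry (eMatOdd m k) i j =
      if i < 2 * m + 1 ∧ j < 2 * m + 1 then
        (if i % 2 = 0 ∧ j + 1 = i + 2 * k then 1 else 0) -
          if j % 2 = 1 ∧ i + 1 = j + 2 * k then 1 else 0
      else 0 := by
    by_cases h : i < 2 * m + 1 ∧ j < 2 * m + 1
    · rw [natEntry, dif_pos h, if_pos h]
      exact eMatOdd_apply hk hkm _ _
    · rw [natEntry, dif_neg h, if_neg h]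
  rw [transpose_mul_shiftMat_add_eq_zero_iff]
  refine ⟨fun i => ?_, fun i j hj => ?_⟩
  · rw [entry]
    split_ifs <;> first | omega | simp_all
  · rw [entry, entry]
    split_ifs <;> first | omega | norm_num

lemma hMat_zero_apply (m : ℕ) (t : Fin (2 * m + 1)) :
    hMat (2 * m + 1) 0 t = if t = 0 then 1 else 0 := by
  rcases eq_or_ne t 0 with rfl | ht
  · simp [hMat_eq_diagonal]
  · simp [hMat_eq_diagonal, ht, diagonal_apply_ne _ ht.symm]

lemma eMatOdd_zero_apply {m k : ℕ} (hk : 1 ≤ k) (hkm : k ≤ m) (t : Fin (2 * m + 1)) :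
    eMatOdd m k 0 t = if (t : ℕ) + 1 = 2 * k then 1 else 0 := by
  have : ¬((t : ℕ) % 2 = 1 ∧ 0 + 1 = t + 2 * k) := by omega
  simp [eMatOdd_apply hk hkm, this]

noncomputable def heComb (m : ℕ) (a : ℂ) (c : ℕ → ℂ) :
    Matrix (Fin (2 * m + 1)) (Fin (2 * m + 1)) ℂ :=
  a • hMat (2 * m + 1) + ∑ k ∈ Finset.Icc 1 m, c k • eMatOdd m k

lemma heComb_sol (m : ℕ) (a : ℂ) (c : ℕ → ℂ) :
    (heComb m a c)ᵀ * shiftMat (2 * m + 1) + shiftMat (2 * m + 1) * heComb m a c = 0 := by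
  change heComb m a c ∈ LinearMap.ker (congrLieMap (shiftMat (2 * m + 1)))
  refine add_mem (Submodule.smul_mem _ _ (hMat_sol _))
    (Submodule.sum_mem _ fun k hk => Submodule.smul_mem _ _ ?_)
  rw [Finset.mem_Icc] at hk
  exact eMatOdd_sol hk.1 hk.2

lemma heComb_mem_span (m : ℕ) (a : ℂ) (c : ℕ → ℂ) :
    heComb m a c ∈ Submodule.span ℂ
      (insert (hMat (2 * m + 1)) {M | ∃ k, 1 ≤ k ∧ k ≤ m ∧ M = eMatOdd m k}) := by
  refine add_mem (Submodule.smul_mem _ _ (Submodule.subset_span (Set.mem_insert _ _)))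
    (Submodule.sum_mem _ fun k hk => Submodule.smul_mem _ _ (Submodule.subset_span ?_))
  rw [Finset.mem_Icc] at hk
  exact Set.mem_insert_of_mem _ ⟨k, hk.1, hk.2, rfl⟩

lemma heComb_zero_apply (m : ℕ) (a : ℂ) (c : ℕ → ℂ) (t : Fin (2 * m + 1)) :
    heComb m a c 0 t = a * (if t = 0 then 1 else 0) +
      ∑ k ∈ Finset.Icc 1 m, c k * if (t : ℕ) + 1 = 2 * k then 1 else 0 := by
  simp only [heComb, Matrix.add_apply, Matrix.smul_apply, Matrix.sum_apply, hMat_zero_apply,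
    smul_eq_mul]
  congr 1
  refine Finset.sum_congr rfl fun k hk => ?_
  rw [Finset.mem_Icc] at hk
  rw [eMatOdd_zero_apply hk.1 hk.2]

lemma heComb_zero_zero (m : ℕ) (a : ℂ) (c : ℕ → ℂ) : heComb m a c 0 0 = a := by
  rw [heComb_zero_apply, Finset.sum_eq_zero fun k hk => by
    rw [Finset.mem_Icc] at hk
    rw [Fin.val_zero, if_neg (by omega), mul_zero]]
  simp

lemma heComb_zero_odd (m : ℕ) (a : ℂ) (c : ℕ → ℂ) {t : Fin (2 * m + 1)} {s : ℕ}
    (hs : (t : ℕ) = 2 * s + 1) : heComb m a c 0 t = c (s + 1) := by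
  rw [heComb_zero_apply, if_neg (by rintro rfl; simp at hs),
    Finset.sum_eq_single_of_mem (s + 1) (Finset.mem_Icc.2 ⟨by omega, by omega⟩)]
  · simp [hs, mul_add]
  · intro k _ hk
    rw [if_neg (by omega), mul_zero]

lemma eq_heComb_of_sol {m : ℕ} {X : Matrix (Fin (2 * m + 1)) (Fin (2 * m + 1)) ℂ}
    (hX : Xᵀ * shiftMat (2 * m + 1) + shiftMat (2 * m + 1) * X = 0) :
    X = heComb m (X 0 0) fun k => natEntry X 0 (2 * k - 1) := by
  have hY : (heComb m (X 0 0) fun k => natEntry X 0 (2 * k - 1)) ∈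
      LinearMap.ker (congrLieMap (shiftMat (2 * m + 1))) := heComb_sol m _ _
  refine sub_eq_zero.1 (eq_zero_of_sol_of_row_zero (sub_mem hX hY) ?_ fun t ⟨s, hs⟩ => ?_)
  · rw [Matrix.sub_apply, heComb_zero_zero, sub_self]
  · rw [Matrix.sub_apply, heComb_zero_odd m _ _ hs, sub_eq_zero,
    show 2 * (s + 1) - 1 = (t : ℕ) by omega]
    simpa using (natEntry_val X 0 t).symm

theorem stmt_10 (m : ℕ) :
    {X : Matrix (Fin (2 * m + 1)) (Fin (2 * m + 1)) ℂ |
        Xᵀ * shiftMat (2 * m + 1) + shiftMat (2 * m + 1) * X = 0} =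
      ↑(Submodule.span ℂ
        (insert (hMat (2 * m + 1)) {M | ∃ kk, 1 ≤ kk ∧ kk ≤ m ∧ M = eMatOdd m kk})) := by
  rw [← coe_ker_congrLieMap, SetLike.coe_set_eq]
  refine le_antisymm (fun X hX => ?_) (Submodule.span_le.2 ?_)
  · rw [eq_heComb_of_sol hX]
    exact heComb_mem_span m _ _
  · rintro _ (rfl | ⟨k, hk, hkm, rfl⟩)
    · exact hMat_sol _
    · exact eMatOdd_sol hk hkm
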